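/- Assuming the induced Menger theorem — there is a function f_M : ℕ² → ℕ such that for every connected graph G with maximum degree at most Δ and X, Y ⊆ V(G), either G contains k pairwise anti-complete (X,Y)-paths, or some Z ⊆ V(G) with |Z| ≤ f_M(k, Δ) meets every (X,Y)-path — there exists a function f_A : ℕ² → ℕ such that for every connected graph G with maximum degree at most Δ and every A ⊆ V(G) with |A| ≥ f_A(d, Δ), G contains d pairwise anti-complete A-paths. -/

import Mathlib

/-
Induction on `d`. Split `A` into a large part `X` and the rest `Y`, and apply the induced Menger
theorem with `k = d + 1`. Either it yields `d + 1` anti-complete `(X, Y)`-paths, which are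
`A`-paths, or a separator `Z` with `|Z| ≤ f_M (d + 1) Δ`. As `G` is connected, every component of
`G - Z` contains a neighbour of `Z`, so `G - Z` has at most `Δ |Z|` components; by pigeonhole one
component `C_X` holds `f_A d Δ` vertices of `X` and one component `C_Y` holds two vertices of `Y`.
Since `Z` separates `X` from `Y`, `C_X ≠ C_Y`, so the two components are anti-complete: the
induction hypothesis in `G[C_X]` and one path through `C_Y` give the `d + 1` paths.
-/

universe u

/-- An `A`-path in `G`: a path of length at least `1` whose two end-vertices lie in `A`. -/
structure SimpleGraph.APath {V : Type*} (G : SimpleGraph V) (A : Set V) where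
  {u : V}
  {v : V}
  walk : G.Walk u v
  isPath : walk.IsPath
  fst_mem : u ∈ A
  snd_mem : v ∈ A
  length_pos : 0 < walk.length

/-- An `(X, Y)`-path in `G`: a path with one end-vertex in `X` and the other in `Y`. -/
structure SimpleGraph.XYPath {V : Type*} (G : SimpleGraph V) (X Y : Set V) where
  {u : V}
  {v : V}
  walk : G.Walk u v
  isPath : walk.IsPath
  fst_mem : u ∈ X
  snd_mem : v ∈ Y

/-- Two vertex sets are anti-complete in `G`: disjoint with no edge between them. -/
def AntiComplete {V : Type*} (G : SimpleGraph V) (S T : Set V) : Prop :=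
  Disjoint S T ∧ ∀ x ∈ S, ∀ y ∈ T, ¬G.Adj x y

open SimpleGraph Finset

variable {V W : Type*} {G : SimpleGraph V} {K : SimpleGraph W}

namespace AntiComplete

variable {S T : Set V}

theorem symm (h : AntiComplete G S T) : AntiComplete G T S :=
  ⟨h.1.symm, fun x hx y hy hxy => h.2 y hy x hx hxy.symm⟩

theorem image (f : K ↪g G) {S T : Set W} (h : AntiComplete K S T) :
    AntiComplete G (f '' S) (f '' T) :=
  ⟨(Set.disjoint_image_iff f.injective).2 h.1, by
    rintro _ ⟨x, hx, rfl⟩ _ ⟨y, hy, rfl⟩ hxy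
    exact h.2 x hx y hy (f.map_adj_iff.1 hxy)⟩

theorem mono {S' T' : Set V} (h : AntiComplete G S T) (hS : S' ⊆ S) (hT : T' ⊆ T) :
    AntiComplete G S' T' :=
  ⟨h.1.mono hS hT, fun x hx y hy => h.2 x (hS hx) y (hT hy)⟩

end AntiComplete

theorem SimpleGraph.ConnectedComponent.antiComplete_supp {C C' : G.ConnectedComponent}
    (h : C ≠ C') : AntiComplete G C.supp C'.supp :=
  ⟨G.pairwise_disjoint_supp_connectedComponent h, fun x hx y hy hxy => h <| by
    rw [← (C.mem_supp_iff x).1 hx, ← (C'.mem_supp_iff y).1 hy]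
    exact ConnectedComponent.connectedComponentMk_eq_of_adj hxy⟩

namespace SimpleGraph.APath

variable {A : Set V}

def vertices (P : G.APath A) : Set V := {x | x ∈ P.walk.support}

def map {B : Set W} (f : K ↪g G) (hf : Set.MapsTo f B A) (P : K.APath B) : G.APath A :=
  ⟨P.walk.map f.toHom, P.isPath.map f.injective, hf P.fst_mem, hf P.snd_mem,
    (P.walk.length_map f.toHom).symm ▸ P.length_pos⟩

theorem vertices_map {B : Set W} (f : K ↪g G) (hf : Set.MapsTo f B A) (P : K.APath B) :
    (P.map f hf).vertices = f '' P.vertices := by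
  ext x
  simp [vertices, map, Walk.support_map]

theorem vertices_map_subset_range {B : Set W} (f : K ↪g G) (hf : Set.MapsTo f B A)
    (P : K.APath B) : (P.map f hf).vertices ⊆ Set.range f :=
  (vertices_map f hf P).trans_subset (Set.image_subset_range _ _)

end SimpleGraph.APath

def SimpleGraph.XYPath.toAPath {X Y A : Set V} (P : G.XYPath X Y) (hXY : Disjoint X Y)
    (hX : X ⊆ A) (hY : Y ⊆ A) : G.APath A :=
  ⟨P.walk, P.isPath, hX P.fst_mem, hY P.snd_mem, Walk.not_nil_iff_lt_length.1 <|
    Walk.not_nil_of_ne (hXY.ne_of_mem P.fst_mem P.snd_mem)⟩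

def SimpleGraph.HasAntiCompleteAPaths (G : SimpleGraph V) (A : Set V) (d : ℕ) : Prop :=
  ∃ P : Fin d → G.APath A, Pairwise fun i j => AntiComplete G (P i).vertices (P j).vertices

namespace SimpleGraph.HasAntiCompleteAPaths

variable {A : Set V}

theorem zero : G.HasAntiCompleteAPaths A 0 :=
  ⟨Fin.elim0, fun i => i.elim0⟩

theorem one [DecidableEq V] (hG : G.Connected) {a b : V} (ha : a ∈ A) (hb : b ∈ A)
    (hab : a ≠ b) : G.HasAntiCompleteAPaths A 1 :=
  let p := (hG.preconnected a b).some.toPath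
  ⟨fun _ => ⟨p.1, p.2, ha, hb, Walk.not_nil_iff_lt_length.1 (Walk.not_nil_of_ne hab)⟩,
    Subsingleton.pairwise⟩

theorem of_xyPaths {X Y : Set V} {k : ℕ} (hXY : Disjoint X Y) (hX : X ⊆ A) (hY : Y ⊆ A)
    (P : Fin k → G.XYPath X Y) (hP : ∀ i j, i ≠ j → AntiComplete G
      {x | x ∈ (P i).walk.support} {x | x ∈ (P j).walk.support}) :
    G.HasAntiCompleteAPaths A k :=
  ⟨fun i => (P i).toAPath hXY hX hY, fun i j => hP i j⟩

theorem append {W' : Type*} {K' : SimpleGraph W'} {d d' : ℕ} (f : K ↪g G) (f' : K' ↪g G)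
    (hff' : AntiComplete G (Set.range f) (Set.range f'))
    (h : K.HasAntiCompleteAPaths (f ⁻¹' A) d) (h' : K'.HasAntiCompleteAPaths (f' ⁻¹' A) d') :
    G.HasAntiCompleteAPaths A (d + d') := by
  obtain ⟨P, hP⟩ := h
  obtain ⟨P', hP'⟩ := h'
  let Q i := (P i).map f (Set.mapsTo_preimage _ _)
  let Q' i := (P' i).map f' (Set.mapsTo_preimage _ _)
  have hQQ' i j : AntiComplete G (Q i).vertices (Q' j).vertices :=
    hff'.mono (APath.vertices_map_subset_range ..) (APath.vertices_map_subset_range ..)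
  refine ⟨Fin.append Q Q', fun i j hij => ?_⟩
  induction i using Fin.addCases with
  | left i => induction j using Fin.addCases with
    | left j =>
      simp only [Fin.append_left, Q, APath.vertices_map]
      exact (hP (fun h => hij (congrArg _ h))).image f
    | right j => simpa only [Fin.append_left, Fin.append_right] using hQQ' i j
  | right i => induction j using Fin.addCases with
    | left j => simpa only [Fin.append_left, Fin.append_right] using (hQQ' j i).symm
    | right j =>
      simp only [Fin.append_right, Q', APath.vertices_map]
      exact (hP' (fun h => hij (congrArg _ h))).image f'

end SimpleGraph.HasAntiCompleteAPaths

namespace SimpleGraph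

theorem exists_adj_reachable_induce_compl {Z : Set V} {a t : V} (p : G.Walk a t) (ha : a ∉ Z)
    (ht : t ∈ Z) : ∃ b : ↥Zᶜ, (∃ z ∈ Z, G.Adj b z) ∧ (G.induce Zᶜ).Reachable ⟨a, ha⟩ b := by
  induction p with
  | nil => exact absurd ht ha
  | @cons x y _ hxy q ih =>
    by_cases hy : y ∈ Z
    · exact ⟨⟨x, ha⟩, ⟨y, hy, hxy⟩, Reachable.refl _⟩
    · obtain ⟨b, hb, hyb⟩ := ih hy ht
      have hxy' : (G.induce Zᶜ).Adj ⟨x, ha⟩ ⟨y, hy⟩ := induce_adj.2 hxy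
      exact ⟨b, hb, hxy'.reachable.trans hyb⟩

theorem connectedComponentMk_induce_compl_ne {Z : Set V} {x y : V} (hx : x ∉ Z) (hy : y ∉ Z)
    (hsep : ∀ p : G.Walk x y, ∃ z ∈ Z, z ∈ p.support) :
    (G.induce Zᶜ).connectedComponentMk ⟨x, hx⟩ ≠
      (G.induce Zᶜ).connectedComponentMk ⟨y, hy⟩ := by
  intro h
  obtain ⟨p⟩ := ConnectedComponent.exact h
  obtain ⟨z, hz, hzp⟩ := hsep (p.map (Embedding.induce Zᶜ).toHom)
  -- restate with the endpoints `⇑f ⟨x, hx⟩`, `⇑f ⟨y, hy⟩` that `Walk.support_map` matches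
  have hzp : z ∈ (p.map (Embedding.induce Zᶜ).toHom).support := hzp
  rw [Walk.support_map, List.mem_map] at hzp
  obtain ⟨w, -, rfl⟩ := hzp
  exact w.2 hz

def ConnectedComponent.induceEmbedding {s : Set V} (C : (G.induce s).ConnectedComponent) :
    (G.induce s).induce C.supp ↪g G :=
  (Embedding.induce C.supp).trans (Embedding.induce s)

theorem ConnectedComponent.range_induceEmbedding {s : Set V}
    (C : (G.induce s).ConnectedComponent) :
    Set.range C.induceEmbedding = Subtype.val '' C.supp := by
  ext x
  constructor
  · rintro ⟨v, rfl⟩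
    exact ⟨v, v.2, rfl⟩
  · rintro ⟨w, hw, rfl⟩
    exact ⟨⟨w, hw⟩, rfl⟩

theorem ConnectedComponent.antiComplete_range_induceEmbedding {s : Set V}
    {C C' : (G.induce s).ConnectedComponent} (h : C ≠ C') :
    AntiComplete G (Set.range C.induceEmbedding) (Set.range C'.induceEmbedding) := by
  rw [C.range_induceEmbedding, C'.range_induceEmbedding]
  exact (C.antiComplete_supp h).image (Embedding.induce s)

variable [Fintype V] [DecidableEq V] [DecidableRel G.Adj] {Δ : ℕ} {Z : Finset V}

theorem card_connectedComponent_induce_compl_le (hG : G.Connected)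
    (hdeg : ∀ v, G.degree v ≤ Δ) (hZ : Z.Nonempty) :
    Fintype.card (G.induce (↑Z : Set V)ᶜ).ConnectedComponent ≤ #Z * Δ := by
  obtain ⟨z₀, hz₀⟩ := hZ
  have hexit : ∀ C : (G.induce (↑Z : Set V)ᶜ).ConnectedComponent, ∃ b : ↥(↑Z : Set V)ᶜ,
      (b : V) ∈ (Z.biUnion fun z => G.neighborFinset z) ∧
        (G.induce _).connectedComponentMk b = C := by
    intro C
    induction C using ConnectedComponent.ind with | h v =>
    obtain ⟨b, ⟨z, hz, hbz⟩, hvb⟩ :=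
      exists_adj_reachable_induce_compl (hG.preconnected v z₀).some v.2 hz₀
    exact ⟨b, mem_biUnion.2 ⟨z, hz, (G.mem_neighborFinset _ _).2 hbz.symm⟩,
      (ConnectedComponent.sound hvb).symm⟩
  choose b hbN hbC using hexit
  calc Fintype.card _ = #(univ : Finset (G.induce (↑Z : Set V)ᶜ).ConnectedComponent) := rfl
    _ ≤ #(Z.biUnion fun z => G.neighborFinset z) :=
      card_le_card_of_injOn (fun C => (b C : V)) (fun C _ => hbN C)
        (fun C _ C' _ h => by rw [← hbC C, ← hbC C', Subtype.ext h])
    _ ≤ #Z * Δ := card_biUnion_le_card_mul _ _ _ fun z _ =>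
      (G.card_neighborFinset_eq_degree z).trans_le (hdeg z)

theorem exists_connectedComponent_induce_compl_lt_card (hG : G.Connected)
    (hdeg : ∀ v, G.degree v ≤ Δ) (hZ : Z.Nonempty) (S : Finset V) {n : ℕ}
    (hS : #Z + #Z * Δ * n < #S) :
    ∃ C : (G.induce (↑Z : Set V)ᶜ).ConnectedComponent,
      n < #{v : C.supp | ((v : ↥(↑Z : Set V)ᶜ) : V) ∈ S} := by
  classical
  set s := S.subtype (· ∈ (↑Z : Set V)ᶜ)
  have hs : #S ≤ #s + #Z := by
    rw [card_subtype, ← card_filter_add_card_filter_not (· ∈ (↑Z : Set V)ᶜ)]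
    gcongr
    intro v
    simp
  have hcard := card_connectedComponent_induce_compl_le hG hdeg hZ
  obtain ⟨C, -, hC⟩ := exists_lt_card_fiber_of_mul_lt_card_of_maps_to
    (s := s) (t := univ) (n := n) (f := (G.induce (↑Z : Set V)ᶜ).connectedComponentMk)
    (fun _ _ => mem_univ _)
    (by rw [card_univ]; have := Nat.mul_le_mul_right n hcard; omega)
  refine ⟨C, hC.trans_le <| (card_le_card fun w hw => ?_).trans_eq
    (card_map (Function.Embedding.subtype (· ∈ C.supp)))⟩
  simp only [mem_filter, mem_subtype, s] at hw
  simp only [mem_map, mem_filter, mem_univ, true_and, Function.Embedding.subtype_apply]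
  exact ⟨⟨w, (C.mem_supp_iff w).2 hw.2⟩, hw.1, rfl⟩

end SimpleGraph

theorem SimpleGraph.HasAntiCompleteAPaths.succ_of_separator {V : Type u} [Fintype V]
    [DecidableEq V] {G : SimpleGraph V} [DecidableRel G.Adj] {Δ n d : ℕ}
    (ih : ∀ (W : Type u) [Fintype W] [DecidableEq W] (K : SimpleGraph W) [DecidableRel K.Adj],
      K.Connected → (∀ v, K.degree v ≤ Δ) → ∀ B : Finset W, n ≤ #B →
        K.HasAntiCompleteAPaths B d)
    (hG : G.Connected) (hdeg : ∀ v, G.degree v ≤ Δ) {A X Y Z : Finset V} (hXA : X ⊆ A)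
    (hYA : Y ⊆ A) (hX : #Z + #Z * Δ * n < #X) (hY : #Z + #Z * Δ < #Y)
    (hsep : ∀ x ∈ X, ∀ y ∈ Y, ∀ p : G.Walk x y, ∃ z ∈ Z, z ∈ p.support) :
    G.HasAntiCompleteAPaths A (d + 1) := by
  have hZ : Z.Nonempty := by
    obtain ⟨x, hx⟩ := card_pos.1 (by omega : 0 < #X)
    obtain ⟨y, hy⟩ := card_pos.1 (by omega : 0 < #Y)
    obtain ⟨z, hz, -⟩ := hsep x hx y hy (hG.preconnected x y).some
    exact ⟨z, hz⟩
  obtain ⟨C, hC⟩ := exists_connectedComponent_induce_compl_lt_card hG hdeg hZ X hX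
  obtain ⟨C', hC'⟩ :=
    exists_connectedComponent_induce_compl_lt_card hG hdeg hZ Y (n := 1) (by rwa [mul_one])
  obtain ⟨x, hx⟩ := card_pos.1 (hC.trans_le' (Nat.zero_le n))
  obtain ⟨y, hy, y', hy', hyy'⟩ := one_lt_card.1 hC'
  have hCC' : C ≠ C' := by
    rw [← (C.mem_supp_iff _).1 x.2, ← (C'.mem_supp_iff _).1 y.2]
    exact connectedComponentMk_induce_compl_ne _ _ <|
      hsep _ (mem_filter.1 hx).2 _ (mem_filter.1 hy).2
  have hCA : n ≤ #(A.preimage C.induceEmbedding C.induceEmbedding.injective.injOn) :=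
    hC.le.trans <| card_le_card fun v hv => mem_preimage.2 (hXA (mem_filter.1 hv).2)
  have hpaths := ih C.supp ((G.induce _).induce C.supp) C.connected_toSimpleGraph
    (fun v => (C.induceEmbedding.toCopy.degree_le v).trans (hdeg _)) _ hCA
  rw [coe_preimage] at hpaths
  exact hpaths.append C.induceEmbedding C'.induceEmbedding
    (ConnectedComponent.antiComplete_range_induceEmbedding hCC')
    (.one C'.connected_toSimpleGraph (hYA (mem_filter.1 hy).2) (hYA (mem_filter.1 hy').2)
      hyy')

def InducedMenger (f_M : ℕ → ℕ → ℕ) : Prop :=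
  ∀ (V : Type u) [Fintype V] [DecidableEq V] (G : SimpleGraph V) [DecidableRel G.Adj]
    (Δ k : ℕ), G.Connected → (∀ v : V, G.degree v ≤ Δ) → ∀ X Y : Set V,
      (∃ P : Fin k → G.XYPath X Y, ∀ i j, i ≠ j → AntiComplete G
        {x | x ∈ (P i).walk.support} {x | x ∈ (P j).walk.support}) ∨
      (∃ Z : Finset V, Z.card ≤ f_M k Δ ∧
        ∀ x ∈ X, ∀ y ∈ Y, ∀ p : G.Walk x y, ∃ z ∈ Z, z ∈ p.support)

-- `X` receives `m (1 + Δ n) + 1` vertices of `A` and `Y` the remaining `≥ m (1 + Δ) + 1`, where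
-- `m = f_M (d + 1) Δ` bounds the separator and `n = aPathBound f_M d Δ`.
def aPathBound (f_M : ℕ → ℕ → ℕ) : ℕ → ℕ → ℕ
  | 0, _ => 0
  | d + 1, Δ =>
    (f_M (d + 1) Δ * (1 + Δ * aPathBound f_M d Δ) + 1) + (f_M (d + 1) Δ * (1 + Δ) + 1)

theorem hasAntiCompleteAPaths_of_inducedMenger {f_M : ℕ → ℕ → ℕ}
    (menger : InducedMenger.{u} f_M) (d : ℕ) :
    ∀ (V : Type u) [Fintype V] [DecidableEq V] (G : SimpleGraph V) [DecidableRel G.Adj] (Δ : ℕ),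
      G.Connected → (∀ v, G.degree v ≤ Δ) → ∀ A : Finset V, aPathBound f_M d Δ ≤ #A →
        G.HasAntiCompleteAPaths A d := by
  induction d with
  | zero => exact fun _ _ _ _ _ _ _ _ _ _ => .zero
  | succ d ih =>
    intro V _ _ G _ Δ hG hdeg A hA
    set m := f_M (d + 1) Δ
    set n := aPathBound f_M d Δ
    replace hA : m * (1 + Δ * n) + 1 + (m * (1 + Δ) + 1) ≤ #A := hA
    obtain ⟨X, hXA, hX⟩ :=
      exists_subset_card_eq (s := A) (n := m * (1 + Δ * n) + 1) (by omega)
    have hY : m * (1 + Δ) + 1 ≤ #(A \ X) := by rw [card_sdiff_of_subset hXA]; omega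
    rcases menger V G Δ (d + 1) hG hdeg X ↑(A \ X) with ⟨P, hP⟩ | ⟨Z, hZ, hsep⟩
    · exact .of_xyPaths (disjoint_coe.2 disjoint_sdiff) (coe_subset.2 hXA)
        (coe_subset.2 sdiff_subset) P hP
    · refine .succ_of_separator (fun W _ _ K _ => ih W K Δ) hG hdeg hXA sdiff_subset ?_ ?_ hsep
      · have := Nat.mul_le_mul_right (1 + Δ * n) hZ
        nlinarith
      · have := Nat.mul_le_mul_right (1 + Δ) hZ
        nlinarith

/-- Assuming the induced Menger theorem (with function `f_M`), there is a
function `f_A` such that every connected graph `G` with maximum degree at most `Δ` and every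
set `A` of at least `f_A d Δ` vertices contains `d` pairwise anti-complete `A`-paths. -/
theorem stmt_19 (f_M : ℕ → ℕ → ℕ)
    (menger : ∀ (V : Type u) [Fintype V] [DecidableEq V] (G : SimpleGraph V)
      [DecidableRel G.Adj] (Δ k : ℕ), G.Connected → (∀ v : V, G.degree v ≤ Δ) →
      ∀ X Y : Set V,
        (∃ P : Fin k → G.XYPath X Y,
          ∀ i j, i ≠ j → AntiComplete G
            {x | x ∈ (P i).walk.support} {x | x ∈ (P j).walk.support}) ∨
        (∃ Z : Finset V, Z.card ≤ f_M k Δ ∧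
          ∀ x ∈ X, ∀ y ∈ Y, ∀ p : G.Walk x y, ∃ z ∈ Z, z ∈ p.support)) :
    ∃ f_A : ℕ → ℕ → ℕ,
      ∀ (V : Type u) [Fintype V] [DecidableEq V] (G : SimpleGraph V)
        [DecidableRel G.Adj] (Δ d : ℕ), G.Connected → (∀ v : V, G.degree v ≤ Δ) →
        ∀ A : Finset V, f_A d Δ ≤ A.card →
          ∃ P : Fin d → G.APath (↑A : Set V),
            ∀ i j, i ≠ j → AntiComplete G
              {x | x ∈ (P i).walk.support} {x | x ∈ (P j).walk.support} := by
  refine ⟨aPathBound f_M, fun V _ _ G _ Δ d hG hdeg A hA => ?_⟩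
  obtain ⟨P, hP⟩ := hasAntiCompleteAPaths_of_inducedMenger menger d V G Δ hG hdeg A hA
  exact ⟨P, fun i j => @hP i j⟩
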